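/- Fix real numbers 0 < p ≤ q ≤ 2, integers n, m ≥ 1, ω > 0, and vectors x₁,…,xₙ ∈ ℝ^m with Σ_{i=1}^n ‖xᵢ‖_q^p ≤ ω. Let α ≥ max(1, 81·ω). Suppose g₁,…,gₙ are {−1,+1}-valued random variables, each uniform and pairwise independent, and χ₁,…,χₙ are pairwise independent {0,1}-valued random variables with P[χᵢ = 1] = 1/α, where the family (gᵢ) is independent of the family (χᵢ). Then P[‖Σ_{i=1}^n gᵢχᵢxᵢ‖_q^p ≤ 1] ≥ 7/9. -/

import Mathlib

/-!
Split the indices according to whether `‖xᵢ‖_q ≤ 1`. There are at most `ω` large ones, since each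
contributes at least `1` to `∑ ‖xᵢ‖_q^p`, so by a union bound some of their selectors fires with
probability at most `ω / α`. For the small ones, condition on the selectors (the two families
are independent, so their joint law is a product) and bound each coordinate: by Lyapunov's
inequality, orthogonality of pairwise independent signs and subadditivity of `t ↦ t ^ (q / 2)`,
`𝔼 |∑ gᵢ cᵢ| ^ q ≤ (∑ cᵢ²) ^ (q / 2) ≤ ∑ |cᵢ| ^ q`. Averaging over the selectors gives
`𝔼 ‖∑ gᵢ χᵢ xᵢ‖_q^q ≤ α⁻¹ ∑ ‖xᵢ‖_q^q ≤ α⁻¹ ∑ ‖xᵢ‖_q^p`, and Markov's inequality finishes: the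
failure probability is at most `ω / α ≤ 1 / 81`.
-/

open MeasureTheory ProbabilityTheory
open scoped ENNReal

theorem ENNReal.rpow_sum_le_sum_rpow {ι : Type*} (s : Finset ι) (f : ι → ℝ≥0∞) {r : ℝ}
    (hr0 : 0 < r) (hr1 : r ≤ 1) : (∑ i ∈ s, f i) ^ r ≤ ∑ i ∈ s, f i ^ r :=
  Finset.le_sum_of_subadditive (· ^ r) (by simp [hr0])
    (fun a b => ENNReal.rpow_add_le_add_rpow a b hr0.le hr1) s f

theorem ENNReal.ofReal_sum_abs_rpow {κ : Type*} (t : Finset κ) (z : κ → ℝ) {q : ℝ}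
    (hq : 0 ≤ q) : ENNReal.ofReal (∑ j ∈ t, |z j| ^ q) = ∑ j ∈ t, ‖z j‖ₑ ^ q := by
  rw [ENNReal.ofReal_sum_of_nonneg fun j _ => by positivity]
  simp_rw [Real.enorm_eq_ofReal_abs, ENNReal.ofReal_rpow_of_nonneg (abs_nonneg _) hq]

theorem Real.min_one_le_rpow {s r : ℝ} (hs : 0 ≤ s) (hr0 : 0 ≤ r) (hr1 : r ≤ 1) :
    min 1 s ≤ s ^ r := by
  rcases le_total s 1 with h | h
  · exact (min_le_right _ _).trans
      (by simpa using Real.rpow_le_rpow_of_exponent_ge' hs h hr0 hr1)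
  · exact (min_le_left _ _).trans (Real.one_le_rpow h hr0)

section Measure

variable {α : Type*} [MeasurableSpace α] {μ : Measure α}

theorem lintegral_enorm_rpow_le_of_exponent_le {E : Type*} [NormedAddCommGroup E]
    [IsProbabilityMeasure μ] {f : α → E} (hf : AEStronglyMeasurable f μ) {q r : ℝ}
    (hq : 0 < q) (hqr : q ≤ r) :
    ∫⁻ a, ‖f a‖ₑ ^ q ∂μ ≤ (∫⁻ a, ‖f a‖ₑ ^ r ∂μ) ^ (q / r) := by
  have h := ENNReal.rpow_le_rpow (eLpNorm'_le_eLpNorm'_of_exponent_le hq hqr μ hf) hq.le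
  rwa [eLpNorm', eLpNorm', ← ENNReal.rpow_mul, ← ENNReal.rpow_mul, one_div_mul_cancel hq.ne',
    ENNReal.rpow_one, one_div_mul_eq_div] at h

theorem lintegral_enorm_rpow_eq_measure_of_zero_or_one {f : α → ℝ} (hf : Measurable f)
    (hfval : ∀ a, f a = 0 ∨ f a = 1) {q : ℝ} (hq : 0 < q) :
    ∫⁻ a, ‖f a‖ₑ ^ q ∂μ = μ {a | f a = 1} := by
  have hf' : ∀ a, ‖f a‖ₑ ^ q = {a | f a = 1}.indicator 1 a := fun a => by
    rcases hfval a with h | h <;> simp [h, hq]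
  rw [lintegral_congr hf']
  exact lintegral_indicator_one (hf (measurableSet_singleton 1))

theorem one_sub_le_prob_of_prob_compl_le [IsProbabilityMeasure μ] {s : Set α} {ε : ℝ≥0∞}
    (h : μ sᶜ ≤ ε) : 1 - ε ≤ μ s := by
  rw [tsub_le_iff_right]
  calc 1 = μ (s ∪ sᶜ) := by simp
    _ ≤ μ s + μ sᶜ := measure_union_le _ _
    _ ≤ μ s + ε := by gcongr

end Measure

section Signs

variable {Ω ι : Type*} [MeasurableSpace Ω] {μ : Measure Ω} [IsProbabilityMeasure μ]
  {g : ι → Ω → ℝ}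

theorem integral_eq_zero_of_sign {f : Ω → ℝ} (hfm : Measurable f)
    (hfval : ∀ ω, f ω = 1 ∨ f ω = -1) (hunif : μ {ω | f ω = 1} = 1 / 2) :
    ∫ ω, f ω ∂μ = 0 := by
  have hS : MeasurableSet {ω | f ω = 1} := hfm (measurableSet_singleton 1)
  have hf : f = fun ω => {ω | f ω = 1}.indicator (fun _ => (2 : ℝ)) ω - 1 := by
    funext ω
    rcases hfval ω with h | h <;> simp [Set.indicator, h] <;> norm_num
  rw [hf, integral_sub ((integrable_const _).indicator hS) (integrable_const _),
    integral_indicator_const _ hS, integral_const]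
  simp [Measure.real, hunif]

theorem integral_sum_mul_sq_of_sign (hgm : ∀ i, Measurable (g i))
    (hgval : ∀ i ω, g i ω = 1 ∨ g i ω = -1) (hmean : ∀ i, ∫ ω, g i ω ∂μ = 0)
    (hgpair : Pairwise fun i j => IndepFun (g i) (g j) μ) (s : Finset ι) (c : ι → ℝ) :
    ∫ ω, (∑ i ∈ s, c i * g i ω) ^ 2 ∂μ = ∑ i ∈ s, c i ^ 2 := by
  classical
  have hL2 : ∀ i, MemLp (g i) 2 μ := fun i =>
    MemLp.of_bound (hgm i).aestronglyMeasurable 1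
      (ae_of_all _ fun ω => by rcases hgval i ω with h | h <;> simp [h])
  have hcorr : ∀ i k, ∫ ω, g i ω * g k ω ∂μ = if i = k then 1 else 0 := by
    intro i k
    split_ifs with hik
    · subst hik
      have hsq : ∀ ω, g i ω * g i ω = 1 := fun ω => by
        rcases hgval i ω with h | h <;> simp [h]
      simp [hsq]
    · rw [(hgpair hik).integral_fun_mul_eq_mul_integral (hgm i).aestronglyMeasurable
        (hgm k).aestronglyMeasurable, hmean i, zero_mul]
  have hint : ∀ i k, Integrable (fun ω => c i * c k * (g i ω * g k ω)) μ := fun i k =>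
    ((hL2 i).integrable_mul (hL2 k)).const_mul _
  calc ∫ ω, (∑ i ∈ s, c i * g i ω) ^ 2 ∂μ
      = ∫ ω, ∑ i ∈ s, ∑ k ∈ s, c i * c k * (g i ω * g k ω) ∂μ := by
        congr with ω
        rw [sq, Finset.sum_mul_sum]
        exact Finset.sum_congr rfl fun i _ => Finset.sum_congr rfl fun k _ => by ring
    _ = ∑ i ∈ s, ∑ k ∈ s, c i * c k * ∫ ω, g i ω * g k ω ∂μ := by
        rw [integral_finsetSum _ fun i _ => integrable_finsetSum _ fun k _ => hint i k]
        refine Finset.sum_congr rfl fun i _ => ?_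
        rw [integral_finsetSum _ fun k _ => hint i k]
        exact Finset.sum_congr rfl fun k _ => integral_const_mul _ _
    _ = ∑ i ∈ s, c i ^ 2 := by simp [hcorr, sq]

theorem lintegral_enorm_sum_mul_rpow_le_of_sign (hgm : ∀ i, Measurable (g i))
    (hgval : ∀ i ω, g i ω = 1 ∨ g i ω = -1) (hmean : ∀ i, ∫ ω, g i ω ∂μ = 0)
    (hgpair : Pairwise fun i j => IndepFun (g i) (g j) μ)
    {q : ℝ} (hq0 : 0 < q) (hq2 : q ≤ 2) (s : Finset ι) (c : ι → ℝ) :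
    ∫⁻ ω, ‖∑ i ∈ s, c i * g i ω‖ₑ ^ q ∂μ ≤ ∑ i ∈ s, ‖c i‖ₑ ^ q := by
  have hZm : Measurable fun ω => ∑ i ∈ s, c i * g i ω :=
    Finset.measurable_sum _ fun i _ => (hgm i).const_mul _
  have hZ2 : Integrable (fun ω => (∑ i ∈ s, c i * g i ω) ^ 2) μ := by
    refine MemLp.integrable_sq (MemLp.of_bound hZm.aestronglyMeasurable (∑ i ∈ s, |c i|) ?_)
    refine ae_of_all _ fun ω => (norm_sum_le _ _).trans (Finset.sum_le_sum fun i _ => ?_)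
    rcases hgval i ω with h | h <;> simp [h]
  have henorm_sq : ∀ z : ℝ, ‖z‖ₑ ^ (2 : ℝ) = ENNReal.ofReal (z ^ 2) := fun z => by
    rw [Real.enorm_eq_ofReal_abs, ENNReal.rpow_two, ← ENNReal.ofReal_pow (abs_nonneg z), sq_abs]
  have hsecond :
      ∫⁻ ω, ‖∑ i ∈ s, c i * g i ω‖ₑ ^ (2 : ℝ) ∂μ = ∑ i ∈ s, ‖c i‖ₑ ^ (2 : ℝ) := by
    simp_rw [henorm_sq]
    rw [← ofReal_integral_eq_lintegral_ofReal hZ2 (ae_of_all _ fun ω => sq_nonneg _),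
      integral_sum_mul_sq_of_sign hgm hgval hmean hgpair,
      ENNReal.ofReal_sum_of_nonneg fun i _ => sq_nonneg _]
  calc ∫⁻ ω, ‖∑ i ∈ s, c i * g i ω‖ₑ ^ q ∂μ
      ≤ (∫⁻ ω, ‖∑ i ∈ s, c i * g i ω‖ₑ ^ (2 : ℝ) ∂μ) ^ (q / 2) :=
        lintegral_enorm_rpow_le_of_exponent_le hZm.aestronglyMeasurable hq0 hq2
    _ ≤ ∑ i ∈ s, (‖c i‖ₑ ^ (2 : ℝ)) ^ (q / 2) := by
        rw [hsecond]
        exact ENNReal.rpow_sum_le_sum_rpow _ _ (by positivity) (by linarith)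
    _ = ∑ i ∈ s, ‖c i‖ₑ ^ q := by
        simp_rw [← ENNReal.rpow_mul]
        ring_nf

theorem lintegral_enorm_sum_mul_mul_rpow_le_of_sign (hgm : ∀ i, Measurable (g i))
    (hgval : ∀ i ω, g i ω = 1 ∨ g i ω = -1) (hmean : ∀ i, ∫ ω, g i ω ∂μ = 0)
    (hgpair : Pairwise fun i j => IndepFun (g i) (g j) μ)
    {χ : ι → Ω → ℝ} (hχm : ∀ i, Measurable (χ i))
    (hfam : IndepFun (fun ω i => g i ω) (fun ω i => χ i ω) μ)
    {q : ℝ} (hq0 : 0 < q) (hq2 : q ≤ 2) (s : Finset ι) (c : ι → ℝ) :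
    ∫⁻ ω, ‖∑ i ∈ s, g i ω * χ i ω * c i‖ₑ ^ q ∂μ
      ≤ ∑ i ∈ s, (∫⁻ ω, ‖χ i ω‖ₑ ^ q ∂μ) * ‖c i‖ₑ ^ q := by
  set G : Ω → ι → ℝ := fun ω i => g i ω
  set X : Ω → ι → ℝ := fun ω i => χ i ω
  have hGm : Measurable G := measurable_pi_lambda _ hgm
  have hXm : Measurable X := measurable_pi_lambda _ hχm
  have hprod : μ.map (fun ω => (G ω, X ω)) = (μ.map G).prod (μ.map X) :=
    (indepFun_iff_map_prod_eq_prod_map_map hGm.aemeasurable hXm.aemeasurable).mp hfam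
  set F : (ι → ℝ) × (ι → ℝ) → ℝ≥0∞ := fun w => ‖∑ i ∈ s, w.1 i * w.2 i * c i‖ₑ ^ q
  have hFm : Measurable F := by fun_prop
  have hinner : ∀ v : ι → ℝ,
      ∫⁻ u, F (u, v) ∂μ.map G ≤ ∑ i ∈ s, ‖v i‖ₑ ^ q * ‖c i‖ₑ ^ q := by
    intro v
    rw [lintegral_map (by fun_prop) hGm]
    calc ∫⁻ ω, ‖∑ i ∈ s, g i ω * v i * c i‖ₑ ^ q ∂μ
        = ∫⁻ ω, ‖∑ i ∈ s, (v i * c i) * g i ω‖ₑ ^ q ∂μ := by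
          refine lintegral_congr fun ω => ?_
          congr 2
          exact Finset.sum_congr rfl fun i _ => by ring
      _ ≤ ∑ i ∈ s, ‖v i * c i‖ₑ ^ q :=
          lintegral_enorm_sum_mul_rpow_le_of_sign hgm hgval hmean hgpair hq0 hq2 s _
      _ = ∑ i ∈ s, ‖v i‖ₑ ^ q * ‖c i‖ₑ ^ q := by
          simp_rw [enorm_mul, ENNReal.mul_rpow_of_nonneg _ _ hq0.le]
  calc ∫⁻ ω, ‖∑ i ∈ s, g i ω * χ i ω * c i‖ₑ ^ q ∂μ
      = ∫⁻ w, F w ∂(μ.map G).prod (μ.map X) := by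
        rw [← hprod, lintegral_map hFm (hGm.prodMk hXm)]
    _ = ∫⁻ v, ∫⁻ u, F (u, v) ∂μ.map G ∂μ.map X := lintegral_prod_symm' _ hFm
    _ ≤ ∫⁻ v, ∑ i ∈ s, ‖v i‖ₑ ^ q * ‖c i‖ₑ ^ q ∂μ.map X := lintegral_mono hinner
    _ = ∑ i ∈ s, (∫⁻ ω, ‖χ i ω‖ₑ ^ q ∂μ) * ‖c i‖ₑ ^ q := by
        rw [lintegral_finsetSum _ fun i _ => by fun_prop]
        refine Finset.sum_congr rfl fun i _ => ?_
        rw [lintegral_mul_const _ (by fun_prop), lintegral_map (by fun_prop) hXm]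

theorem lintegral_ofReal_sum_abs_sum_mul_mul_rpow_le_of_sign {κ : Type*} [Fintype κ]
    (hgm : ∀ i, Measurable (g i)) (hgval : ∀ i ω, g i ω = 1 ∨ g i ω = -1)
    (hmean : ∀ i, ∫ ω, g i ω ∂μ = 0) (hgpair : Pairwise fun i j => IndepFun (g i) (g j) μ)
    {χ : ι → Ω → ℝ} (hχm : ∀ i, Measurable (χ i)) (hχval : ∀ i ω, χ i ω = 0 ∨ χ i ω = 1)
    (hfam : IndepFun (fun ω i => g i ω) (fun ω i => χ i ω) μ)
    {q : ℝ} (hq0 : 0 < q) (hq2 : q ≤ 2) (s : Finset ι) (x : ι → κ → ℝ) :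
    ∫⁻ ω, ENNReal.ofReal (∑ j, |∑ i ∈ s, g i ω * χ i ω * x i j| ^ q) ∂μ
      ≤ ∑ i ∈ s, μ {ω | χ i ω = 1} * ENNReal.ofReal (∑ j, |x i j| ^ q) := by
  simp_rw [ENNReal.ofReal_sum_abs_rpow _ _ hq0.le, Finset.mul_sum]
  rw [lintegral_finsetSum _ fun j _ => by fun_prop, Finset.sum_comm]
  refine Finset.sum_le_sum fun j _ => ?_
  simpa only [lintegral_enorm_rpow_eq_measure_of_zero_or_one (hχm _) (hχval _) hq0] using
    lintegral_enorm_sum_mul_mul_rpow_le_of_sign hgm hgval hmean hgpair hχm hfam hq0 hq2 s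
      (x · j)

theorem measure_one_lt_sum_abs_sum_mul_mul_rpow_le_of_sign [Fintype ι] {κ : Type*} [Fintype κ]
    (hgm : ∀ i, Measurable (g i)) (hgval : ∀ i ω, g i ω = 1 ∨ g i ω = -1)
    (hmean : ∀ i, ∫ ω, g i ω ∂μ = 0) (hgpair : Pairwise fun i j => IndepFun (g i) (g j) μ)
    {χ : ι → Ω → ℝ} (hχm : ∀ i, Measurable (χ i)) (hχval : ∀ i ω, χ i ω = 0 ∨ χ i ω = 1)
    (hfam : IndepFun (fun ω i => g i ω) (fun ω i => χ i ω) μ)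
    {q : ℝ} (hq0 : 0 < q) (hq2 : q ≤ 2) (x : ι → κ → ℝ) :
    μ {ω | 1 < ∑ j, |∑ i, g i ω * χ i ω * x i j| ^ q}
      ≤ ∑ i, μ {ω | χ i ω = 1} * ENNReal.ofReal (min 1 (∑ j, |x i j| ^ q)) := by
  classical
  set N : ι → ℝ := fun i => ∑ j, |x i j| ^ q
  set S : Finset ι := {i | N i ≤ 1}
  have hsub : {ω | 1 < ∑ j, |∑ i, g i ω * χ i ω * x i j| ^ q} ⊆
      (⋃ i ∈ Sᶜ, {ω | χ i ω = 1}) ∪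
        {ω | 1 ≤ ENNReal.ofReal (∑ j, |∑ i ∈ S, g i ω * χ i ω * x i j| ^ q)} := by
    intro ω hω
    by_contra h
    simp only [Set.mem_union, Set.mem_iUnion, Set.mem_ofPred_eq, not_or, not_exists, not_le,
      ENNReal.ofReal_lt_one] at h
    obtain ⟨hA, hB⟩ := h
    have hsum : ∀ j, ∑ i, g i ω * χ i ω * x i j = ∑ i ∈ S, g i ω * χ i ω * x i j := fun j =>
      (Finset.sum_subset (Finset.subset_univ S) fun i _ hi => by
        rw [(hχval i ω).resolve_right (hA i (Finset.mem_compl.2 hi)), mul_zero, zero_mul]).symm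
    simp only [Set.mem_ofPred_eq, hsum] at hω
    exact hB.not_gt hω
  calc μ {ω | 1 < ∑ j, |∑ i, g i ω * χ i ω * x i j| ^ q}
      ≤ μ (⋃ i ∈ Sᶜ, {ω | χ i ω = 1}) +
          μ {ω | 1 ≤ ENNReal.ofReal (∑ j, |∑ i ∈ S, g i ω * χ i ω * x i j| ^ q)} :=
        (measure_mono hsub).trans (measure_union_le _ _)
    _ ≤ ∑ i ∈ Sᶜ, μ {ω | χ i ω = 1} + ∑ i ∈ S, μ {ω | χ i ω = 1} * ENNReal.ofReal (N i) := by
        gcongr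
        · exact measure_biUnion_finset_le _ _
        · refine (meas_ge_le_lintegral_div (by fun_prop) one_ne_zero ENNReal.one_ne_top).trans ?_
          rw [div_one]
          exact lintegral_ofReal_sum_abs_sum_mul_mul_rpow_le_of_sign hgm hgval hmean hgpair hχm
            hχval hfam hq0 hq2 S x
    _ = ∑ i, μ {ω | χ i ω = 1} * ENNReal.ofReal (min 1 (N i)) := by
        rw [← Finset.sum_compl_add_sum S]
        congr 1 <;> refine Finset.sum_congr rfl fun i hi => ?_
        · simp only [S, Finset.mem_compl, Finset.mem_filter, Finset.mem_univ, true_and,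
            not_le] at hi
          rw [min_eq_left hi.le, ENNReal.ofReal_one, mul_one]
        · simp only [S, Finset.mem_filter, Finset.mem_univ, true_and] at hi
          rw [min_eq_right hi]

end Signs

theorem generalized_type_lq_low_general (p q : ℝ) (hp : 0 < p) (hpq : p ≤ q) (hq : q ≤ 2)
    (n m : ℕ) (ω : ℝ)
    (x : Fin n → Fin m → ℝ)
    (hx : ∑ i, (∑ j, |x i j| ^ q) ^ (p / q) ≤ ω)
    (α : ℝ) (hα : max 1 (81 * ω) ≤ α)
    {Ω : Type} [MeasurableSpace Ω] (P : Measure Ω) [IsProbabilityMeasure P]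
    (g χ : Fin n → Ω → ℝ)
    (hgm : ∀ i, Measurable (g i)) (hχm : ∀ i, Measurable (χ i))
    (hgval : ∀ i θ, g i θ = 1 ∨ g i θ = -1)
    (hχval : ∀ i θ, χ i θ = 0 ∨ χ i θ = 1)
    (hgunif : ∀ i, P {θ | g i θ = 1} = 1 / 2)
    (hχprob : ∀ i, P {θ | χ i θ = 1} = ENNReal.ofReal (1 / α))
    (hgpair : Pairwise fun i j => IndepFun (g i) (g j) P)
    (hfam : IndepFun (fun θ i => g i θ) (fun θ i => χ i θ) P) :
    (7 : ℝ≥0∞) / 9 ≤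
      P {θ | (∑ j, |∑ i, g i θ * χ i θ * x i j| ^ q) ^ (p / q) ≤ 1} := by
  have hq0 : 0 < q := hp.trans_le hpq
  have hα0 : 0 < α := one_pos.trans_le ((le_max_left _ _).trans hα)
  have hmass : ∑ i, ENNReal.ofReal (min 1 (∑ j, |x i j| ^ q)) ≤ ENNReal.ofReal ω := by
    rw [← ENNReal.ofReal_sum_of_nonneg fun i _ => le_min zero_le_one (by positivity)]
    refine ENNReal.ofReal_le_ofReal ((Finset.sum_le_sum fun i _ => ?_).trans hx)
    exact Real.min_one_le_rpow (by positivity) (by positivity) (div_le_one_of_le₀ hpq hq0.le)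
  have htail : P {θ | 1 < ∑ j, |∑ i, g i θ * χ i θ * x i j| ^ q} ≤ ENNReal.ofReal (2 / 9) :=
    calc _ ≤ ∑ i, ENNReal.ofReal (1 / α) * ENNReal.ofReal (min 1 (∑ j, |x i j| ^ q)) := by
          simpa only [hχprob] using measure_one_lt_sum_abs_sum_mul_mul_rpow_le_of_sign hgm hgval
            (fun i => integral_eq_zero_of_sign (hgm i) (hgval i) (hgunif i)) hgpair hχm hχval
            hfam hq0 hq x
      _ ≤ ENNReal.ofReal (1 / α) * ENNReal.ofReal ω := by rw [← Finset.mul_sum]; gcongr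
      _ ≤ ENNReal.ofReal (2 / 9) := by
          rw [← ENNReal.ofReal_mul (by positivity)]
          refine ENNReal.ofReal_le_ofReal ?_
          rw [one_div_mul_eq_div, div_le_iff₀ hα0]
          linarith [le_max_right 1 (81 * ω)]
  have hgood : {θ | 1 < ∑ j, |∑ i, g i θ * χ i θ * x i j| ^ q}ᶜ ⊆
      {θ | (∑ j, |∑ i, g i θ * χ i θ * x i j| ^ q) ^ (p / q) ≤ 1} := fun θ hθ =>
    Real.rpow_le_one (by positivity) (not_lt.1 hθ) (by positivity)
  calc (7 : ℝ≥0∞) / 9 = 1 - ENNReal.ofReal (2 / 9) := by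
        rw [← ENNReal.ofReal_one, ← ENNReal.ofReal_sub _ (by norm_num)]
        norm_num [ENNReal.ofReal_div_of_pos]
    _ ≤ _ := one_sub_le_prob_of_prob_compl_le (by rwa [compl_compl])
    _ ≤ _ := measure_mono hgood

/-- Generalized `p`-type bound for `ℓ_q^m` with `0 < p ≤ q ≤ 2`: if
`Σᵢ ‖xᵢ‖_q^p ≤ ω` and `α ≥ max(1, 81 ω)`, then for pairwise independent uniform signs
`gᵢ` and pairwise independent Bernoulli(`1/α`) variables `χᵢ` (the two families being
independent of each other), `P[‖Σᵢ gᵢ χᵢ xᵢ‖_q^p ≤ 1] ≥ 7/9`. -/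
theorem generalized_type_lq_low (p q : ℝ) (hp : 0 < p) (hpq : p ≤ q) (hq : q ≤ 2)
    (n m : ℕ) (hn : 1 ≤ n) (hm : 1 ≤ m) (ω : ℝ) (hω : 0 < ω)
    (x : Fin n → Fin m → ℝ)
    (hx : ∑ i, (∑ j, |x i j| ^ q) ^ (p / q) ≤ ω)
    (α : ℝ) (hα : max 1 (81 * ω) ≤ α)
    {Ω : Type} [MeasurableSpace Ω] (P : Measure Ω) [IsProbabilityMeasure P]
    (g χ : Fin n → Ω → ℝ)
    (hgm : ∀ i, Measurable (g i)) (hχm : ∀ i, Measurable (χ i))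
    (hgval : ∀ i θ, g i θ = 1 ∨ g i θ = -1)
    (hχval : ∀ i θ, χ i θ = 0 ∨ χ i θ = 1)
    (hgunif : ∀ i, P {θ | g i θ = 1} = 1 / 2)
    (hχprob : ∀ i, P {θ | χ i θ = 1} = ENNReal.ofReal (1 / α))
    (hgpair : Pairwise fun i j => IndepFun (g i) (g j) P)
    (hχpair : Pairwise fun i j => IndepFun (χ i) (χ j) P)
    (hfam : IndepFun (fun θ i => g i θ) (fun θ i => χ i θ) P) :
    (7 : ℝ≥0∞) / 9 ≤
      P {θ | (∑ j, |∑ i, g i θ * χ i θ * x i j| ^ q) ^ (p / q) ≤ 1} :=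
  generalized_type_lq_low_general p q hp hpq hq n m ω x hx α hα P g χ hgm hχm hgval hχval hgunif
    hχprob hgpair hfam
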